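/- arXiv:0711.0367 — 2 statements merged into one kernel-verified Lean document; each statement's English description precedes it below -/
import Mathlib

section
/- In the quantizer-based recursive scheme, fix j ≥ 1 and m ≥ 1, and let B = {G_{j-1}(X_{-m}^{-1}) = b_{-m}^{-1}, λ_{j-1} = m} be a generating atom of the σ-field σ(G_{j-1}(X_{-λ_{j-1}}^{-1})). Define the forward return time τ̃_j = min{t > 0 : G_j(X_{-λ_{j-1}+t}^{-1+t}) = G_j(X_{-λ_{j-1}}^{-1})}. Then for every l ≥ 1 and every Borel set C, as an exact identity of events, T^{-l}(B ∩ {τ_j = l} ∩ {X_{-l} ∈ C}) = B ∩ {τ̃_j = l} ∩ {X_0 ∈ C}, where T is the left shift. -/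
open MeasureTheory ProbabilityTheory Filter Set Topology

/-- `lamQ G X k ω` is the random length `λ_k` of the quantizer-based recursive
pattern-matching scheme: `λ_0 = 1` and `λ_k = τ_k + λ_{k-1}`, where
`τ_k = min {t > 0 : G_k(X_{-λ_{k-1}-t}^{-1-t}) = G_k(X_{-λ_{k-1}}^{-1})}`. -/
noncomputable def lamQ {Ω : Type*} (G : ℕ → ℝ → ℕ) (X : ℤ → Ω → ℝ) : ℕ → Ω → ℕ
  | 0 => fun _ => 1
  | k + 1 => fun ω =>
      sInf {t : ℕ | 0 < t ∧ ∀ i : ℕ, 1 ≤ i → i ≤ lamQ G X k ω →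
          G (k + 1) (X (-(i : ℤ) - (t : ℤ)) ω) = G (k + 1) (X (-(i : ℤ)) ω)}
        + lamQ G X k ω

/-- `tauQ G X k ω` is the return time `τ_k` (for `k ≥ 1`):
`τ_k = min {t > 0 : G_k(X_{-λ_{k-1}-t}^{-1-t}) = G_k(X_{-λ_{k-1}}^{-1})}`. -/
noncomputable def tauQ {Ω : Type*} (G : ℕ → ℝ → ℕ) (X : ℤ → Ω → ℝ) (k : ℕ) (ω : Ω) : ℕ :=
  sInf {t : ℕ | 0 < t ∧ ∀ i : ℕ, 1 ≤ i → i ≤ lamQ G X (k - 1) ω →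
      G k (X (-(i : ℤ) - (t : ℤ)) ω) = G k (X (-(i : ℤ)) ω)}

/-- `pastSigma X` is the σ-field `σ(X_{-1}, X_{-2}, …)` generated by the infinite past. -/
noncomputable def pastSigma {Ω : Type*} (X : ℤ → Ω → ℝ) : MeasurableSpace Ω :=
  ⨆ n : ℕ, MeasurableSpace.comap (X (-(n : ℤ) - 1)) inferInstance

/-- `patF G X j` is the σ-field `ℱ_j = σ(G_j(X_{-λ_j}^{-1}))` generated by the quantized
pattern of (random) length `λ_j`, i.e. by the events `{G_j(X_{-m}^{-1}) = b, λ_j = m}`. -/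
noncomputable def patF {Ω : Type*} (G : ℕ → ℝ → ℕ) (X : ℤ → Ω → ℝ) (j : ℕ) :
    MeasurableSpace Ω :=
  MeasurableSpace.comap
    (fun ω (i : ℕ) =>
      if 1 ≤ i ∧ i ≤ lamQ G X j ω then some (G j (X (-(i : ℤ)) ω)) else none) ⊤

/-- `tauTildeQ G X j ω` is the forward return time
`τ̃_j = min {t > 0 : G_j(X_{-λ_{j-1}+t}^{-1+t}) = G_j(X_{-λ_{j-1}}^{-1})}`. -/
noncomputable def tauTildeQ {Ω : Type*} (G : ℕ → ℝ → ℕ) (X : ℤ → Ω → ℝ) (j : ℕ) (ω : Ω) : ℕ :=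
  sInf {t : ℕ | 0 < t ∧ ∀ i : ℕ, 1 ≤ i → i ≤ lamQ G X (j - 1) ω →
      G j (X (-(i : ℤ) + (t : ℤ)) ω) = G j (X (-(i : ℤ)) ω)}

lemma refine_aux {G : ℕ → ℝ → ℕ} {j : ℕ} (hj : 1 ≤ j)
    (hGmono : ∀ k, MeasurableSpace.comap (G k) ⊤ ≤ MeasurableSpace.comap (G (k + 1)) ⊤)
    {x y : ℝ} (h : G j x = G j y) : G (j - 1) x = G (j - 1) y := by
  have hjj : j - 1 + 1 = j := Nat.succ_pred_eq_of_pos hj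
  have hmeas : MeasurableSet[MeasurableSpace.comap (G (j - 1)) ⊤]
      ((G (j - 1)) ⁻¹' {G (j - 1) x}) := ⟨{G (j - 1) x}, trivial, rfl⟩
  obtain ⟨s, -, hs⟩ := hGmono (j - 1) _ hmeas
  rw [hjj] at hs
  have hx : x ∈ G j ⁻¹' s := by rw [hs]; exact rfl
  have hy : y ∈ G j ⁻¹' s := by simpa [Set.mem_preimage, ← h] using hx
  rw [hs] at hy
  exact (Set.mem_singleton_iff.mp hy).symm

lemma shift_iter {Ω : Type*} {T : Ω → Ω} {X : ℤ → Ω → ℝ}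
    (hshift : ∀ n ω, X n (T ω) = X (n + 1) ω) :
    ∀ (l : ℕ) (n : ℤ) (ω : Ω), X n (T^[l] ω) = X (n + l) ω
  | 0, n, ω => by simp
  | l + 1, n, ω => by
      rw [Function.iterate_succ', Function.comp_apply, hshift,
        shift_iter hshift l (n + 1) ω]
      congr 1
      push_cast
      ring

lemma sInf_mem_of_eq {S : Set ℕ} {l : ℕ} (h : sInf S = l) (hl : 1 ≤ l) : l ∈ S := by
  have hne : S.Nonempty := by
    by_contra hne
    rw [Set.not_nonempty_iff_eq_empty] at hne
    rw [hne, Nat.sInf_empty] at h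
    omega
  exact h ▸ Nat.sInf_mem hne

/-- Exact event identity: for a generating atom
`B = {G_{j-1}(X_{-m}^{-1}) = b, λ_{j-1} = m}` of `σ(G_{j-1}(X_{-λ_{j-1}}^{-1}))`, every
`l ≥ 1` and every Borel set `C`,
`T^{-l}(B ∩ {τ_j = l} ∩ {X_{-l} ∈ C}) = B ∩ {τ̃_j = l} ∩ {X_0 ∈ C}`. -/
theorem stmt5 {Ω : Type*} [MeasurableSpace Ω] (μ : Measure Ω) [IsProbabilityMeasure μ]
    (T : Ω → Ω) (X : ℤ → Ω → ℝ) (G : ℕ → ℝ → ℕ)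
    (hT : MeasurePreserving T μ μ)
    (hXmeas : ∀ n, Measurable (X n))
    (hshift : ∀ n ω, X n (T ω) = X (n + 1) ω)
    (hGfin : ∀ k, (Set.range (G k)).Finite)
    (hGint : ∀ k n, ∃ a b : EReal,
      (G k) ⁻¹' {n} = {x : ℝ | a < (x : EReal) ∧ (x : EReal) ≤ b})
    (hGmono : ∀ k, MeasurableSpace.comap (G k) ⊤ ≤ MeasurableSpace.comap (G (k + 1)) ⊤)
    (hGgen : (⨆ k, MeasurableSpace.comap (G k) ⊤) = (inferInstance : MeasurableSpace ℝ))
    (j m l : ℕ) (hj : 1 ≤ j) (hm : 1 ≤ m) (hl : 1 ≤ l) (b : ℕ → ℕ)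
    -- `λ_{j-1}` is a stopping time of the quantized past: on the cylinder determined by `b`,
    -- necessarily `λ_{j-1} = m`.
    (hstop : ∀ ω, (∀ i : ℕ, 1 ≤ i → i ≤ m → G (j - 1) (X (-(i : ℤ)) ω) = b i) →
      lamQ G X (j - 1) ω = m)
    (C : Set ℝ) (hC : MeasurableSet C) :
    (T^[l]) ⁻¹'
        ({ω | (∀ i : ℕ, 1 ≤ i → i ≤ m → G (j - 1) (X (-(i : ℤ)) ω) = b i) ∧
            lamQ G X (j - 1) ω = m}
          ∩ {ω | tauQ G X j ω = l} ∩ {ω | X (-(l : ℤ)) ω ∈ C})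
      = {ω | (∀ i : ℕ, 1 ≤ i → i ≤ m → G (j - 1) (X (-(i : ℤ)) ω) = b i) ∧
            lamQ G X (j - 1) ω = m}
          ∩ {ω | tauTildeQ G X j ω = l} ∩ {ω | X 0 ω ∈ C} := by
  ext ω
  simp only [Set.mem_preimage, Set.mem_inter_iff, Set.mem_setOf_eq]
  have hXs : ∀ n : ℤ, X n (T^[l] ω) = X (n + l) ω := fun n => shift_iter hshift l n ω
  constructor
  · rintro ⟨⟨⟨hB, hlamT⟩, htau⟩, hC0⟩
    have hlS : l ∈ {t : ℕ | 0 < t ∧ ∀ i : ℕ, 1 ≤ i → i ≤ lamQ G X (j - 1) (T^[l] ω) →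
        G j (X (-(i : ℤ) - (t : ℤ)) (T^[l] ω)) = G j (X (-(i : ℤ)) (T^[l] ω))} :=
      sInf_mem_of_eq htau hl
    have hmatch : ∀ i : ℕ, 1 ≤ i → i ≤ m →
        G j (X (-(i : ℤ)) ω) = G j (X (-(i : ℤ) + l) ω) := by
      intro i h1 h2
      have h3 := hlS.2 i h1 (by rw [hlamT]; exact h2)
      rwa [hXs, hXs, show -(i : ℤ) - (l : ℤ) + l = -(i : ℤ) by ring] at h3
    have hB' : ∀ i : ℕ, 1 ≤ i → i ≤ m → G (j - 1) (X (-(i : ℤ)) ω) = b i := by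
      intro i h1 h2
      have h4 := hB i h1 h2
      rw [hXs] at h4
      calc G (j - 1) (X (-(i : ℤ)) ω) = G (j - 1) (X (-(i : ℤ) + l) ω) :=
            refine_aux hj hGmono (hmatch i h1 h2)
        _ = b i := h4
    have hlam' : lamQ G X (j - 1) ω = m := hstop ω hB'
    have hlS' : l ∈ {t : ℕ | 0 < t ∧ ∀ i : ℕ, 1 ≤ i → i ≤ lamQ G X (j - 1) ω →
        G j (X (-(i : ℤ) + (t : ℤ)) ω) = G j (X (-(i : ℤ)) ω)} := by
      refine ⟨hl, fun i h1 h2 => ?_⟩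
      rw [hlam'] at h2
      exact (hmatch i h1 h2).symm
    have hmin : ∀ t ∈ {t : ℕ | 0 < t ∧ ∀ i : ℕ, 1 ≤ i → i ≤ lamQ G X (j - 1) ω →
        G j (X (-(i : ℤ) + (t : ℤ)) ω) = G j (X (-(i : ℤ)) ω)}, l ≤ t := by
      intro t ht
      by_contra hlt
      push_neg at hlt
      have hmem : (l - t) ∈ {t : ℕ | 0 < t ∧ ∀ i : ℕ, 1 ≤ i →
          i ≤ lamQ G X (j - 1) (T^[l] ω) →
          G j (X (-(i : ℤ) - (t : ℤ)) (T^[l] ω)) = G j (X (-(i : ℤ)) (T^[l] ω))} := by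
        refine ⟨by omega, fun i h1 h2 => ?_⟩
        rw [hlamT] at h2
        rw [hXs, hXs]
        have hc : ((l - t : ℕ) : ℤ) = (l : ℤ) - t := by
          have : t ≤ l := le_of_lt hlt
          omega
        rw [hc, show -(i : ℤ) - ((l : ℤ) - t) + l = -(i : ℤ) + t by ring]
        calc G j (X (-(i : ℤ) + t) ω) = G j (X (-(i : ℤ)) ω) := by
              rw [hlam'] at ht; exact ht.2 i h1 h2
          _ = G j (X (-(i : ℤ) + l) ω) := hmatch i h1 h2
      have h5 : tauQ G X j (T^[l] ω) ≤ l - t := Nat.sInf_le hmem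
      have ht1 : 0 < t := ht.1
      rw [htau] at h5
      omega
    refine ⟨⟨⟨hB', hlam'⟩, ?_⟩, ?_⟩
    · exact le_antisymm (Nat.sInf_le hlS') (le_csInf ⟨l, hlS'⟩ hmin)
    · have := hC0
      rw [hXs] at this
      simpa using this
  · rintro ⟨⟨⟨hB', hlam'⟩, htt⟩, hC0⟩
    have hlS' : l ∈ {t : ℕ | 0 < t ∧ ∀ i : ℕ, 1 ≤ i → i ≤ lamQ G X (j - 1) ω →
        G j (X (-(i : ℤ) + (t : ℤ)) ω) = G j (X (-(i : ℤ)) ω)} :=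
      sInf_mem_of_eq htt hl
    have hmatch : ∀ i : ℕ, 1 ≤ i → i ≤ m →
        G j (X (-(i : ℤ) + l) ω) = G j (X (-(i : ℤ)) ω) := by
      intro i h1 h2
      exact hlS'.2 i h1 (by rw [hlam']; exact h2)
    have hB : ∀ i : ℕ, 1 ≤ i → i ≤ m → G (j - 1) (X (-(i : ℤ)) (T^[l] ω)) = b i := by
      intro i h1 h2
      rw [hXs]
      calc G (j - 1) (X (-(i : ℤ) + l) ω) = G (j - 1) (X (-(i : ℤ)) ω) :=
            refine_aux hj hGmono (hmatch i h1 h2)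
        _ = b i := hB' i h1 h2
    have hlamT : lamQ G X (j - 1) (T^[l] ω) = m := hstop (T^[l] ω) hB
    have hlS : l ∈ {t : ℕ | 0 < t ∧ ∀ i : ℕ, 1 ≤ i → i ≤ lamQ G X (j - 1) (T^[l] ω) →
        G j (X (-(i : ℤ) - (t : ℤ)) (T^[l] ω)) = G j (X (-(i : ℤ)) (T^[l] ω))} := by
      refine ⟨hl, fun i h1 h2 => ?_⟩
      rw [hlamT] at h2
      rw [hXs, hXs, show -(i : ℤ) - (l : ℤ) + l = -(i : ℤ) by ring]
      exact (hmatch i h1 h2).symm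
    have hmin : ∀ t ∈ {t : ℕ | 0 < t ∧ ∀ i : ℕ, 1 ≤ i → i ≤ lamQ G X (j - 1) (T^[l] ω) →
        G j (X (-(i : ℤ) - (t : ℤ)) (T^[l] ω)) = G j (X (-(i : ℤ)) (T^[l] ω))}, l ≤ t := by
      intro t ht
      by_contra hlt
      push_neg at hlt
      have hmem : (l - t) ∈ {t : ℕ | 0 < t ∧ ∀ i : ℕ, 1 ≤ i → i ≤ lamQ G X (j - 1) ω →
          G j (X (-(i : ℤ) + (t : ℤ)) ω) = G j (X (-(i : ℤ)) ω)} := by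
        refine ⟨by omega, fun i h1 h2 => ?_⟩
        rw [hlam'] at h2
        have h6 := ht.2 i h1 (by rw [hlamT]; exact h2)
        rw [hXs, hXs] at h6
        have hc : ((l - t : ℕ) : ℤ) = (l : ℤ) - t := by
          have : t ≤ l := le_of_lt hlt
          omega
        rw [hc, show -(i : ℤ) + ((l : ℤ) - t) = -(i : ℤ) - t + l by ring]
        calc G j (X (-(i : ℤ) - t + l) ω) = G j (X (-(i : ℤ) + l) ω) := h6
          _ = G j (X (-(i : ℤ)) ω) := hmatch i h1 h2
      have h5 : tauTildeQ G X j ω ≤ l - t := Nat.sInf_le hmem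
      have ht1 : 0 < t := ht.1
      rw [htt] at h5
      omega
    refine ⟨⟨⟨hB, hlamT⟩, ?_⟩, ?_⟩
    · exact le_antisymm (Nat.sInf_le hlS) (le_csInf ⟨l, hlS⟩ hmin)
    · rw [hXs]
      simpa using hC0
end

section
/- In the quantizer-based recursive scheme, for every Borel set C the Cesàro averages of the successive conditional probabilities converge to the conditional probability given the infinite past: almost surely, (1/k) Σ_{j=1}^{k} P(X_0 ∈ C | σ(G_{j-1}(X_{-λ_{j-1}}^{-1}))) → P(X_0 ∈ C | X_{-1}, X_{-2}, …) as k → ∞. -/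
open MeasureTheory ProbabilityTheory Filter Set Topology

/-!
The σ-fields `ℱ_j = patF G X j` increase: the partitions refine, and the recursion for `λ_m`,
`m ≤ j`, only inspects positions up to `λ_j`, so the pattern of length `λ_j` determines the
shorter ones. Lévy's upward theorem gives `P(X_0 ∈ C | ℱ_j) → P(X_0 ∈ C | ⋁ ℱ_j)` a.s., and the
Cesàro averages have the same limit. By Poincaré recurrence every quantized pattern of the past
reappears further back almost surely, so `λ_j ≥ j + 1` and `ℱ_{k+n}` sees `G_k(X_{-n-1})`. As the
partitions generate the Borel sets, `⋁ ℱ_j` agrees with `σ(X_{-1}, X_{-2}, …)` up to null sets,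
which does not change the conditional expectation.
-/

namespace MeasurableSpace

variable {α β γ : Type*}

theorem comap_top_le_comap_top_iff {f : α → β} {g : α → γ} :
    MeasurableSpace.comap f ⊤ ≤ MeasurableSpace.comap g ⊤ ↔ ∀ x y, g x = g y → f x = f y := by
  constructor
  · intro h x y hxy
    obtain ⟨S, -, hS⟩ := h _ ⟨{f x}, trivial, rfl⟩
    have hy : y ∈ g ⁻¹' S := by
      rw [mem_preimage, ← hxy, ← mem_preimage, hS]
      rfl
    rw [hS] at hy
    exact hy.symm
  · rintro h _ ⟨S, -, rfl⟩
    refine ⟨g '' (f ⁻¹' S), trivial, ?_⟩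
    ext x
    exact ⟨fun ⟨y, hy, hyx⟩ => by rw [mem_preimage, ← h y x hyx]; exact hy,
      fun hx => ⟨x, hx, rfl⟩⟩

theorem comap_top_le_of_countable_range {m : MeasurableSpace α} {f : α → β}
    (hf : (range f).Countable) (hfib : ∀ x, MeasurableSet[m] (f ⁻¹' {f x})) :
    MeasurableSpace.comap f ⊤ ≤ m := by
  rintro _ ⟨S, -, rfl⟩
  rw [← preimage_inter_range, ← biUnion_preimage_singleton]
  refine MeasurableSet.biUnion (hf.mono inter_subset_right) ?_
  rintro _ ⟨-, x, rfl⟩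
  exact hfib x

end MeasurableSpace

theorem Nat.sInf_eq_of_forall_le_mem_iff {A B : Set ℕ} {N : ℕ}
    (h : ∀ t ≤ N, t ∈ A ↔ t ∈ B) (hA : sInf A ≤ N) (hB : sInf B ≤ N) : sInf A = sInf B := by
  rcases A.eq_empty_or_nonempty with rfl | hAne
  · rcases B.eq_empty_or_nonempty with rfl | hBne
    · rfl
    · exact absurd ((h _ hB).2 (Nat.sInf_mem hBne)) (notMem_empty _)
  · have hBne : B.Nonempty := ⟨_, (h _ hA).1 (Nat.sInf_mem hAne)⟩
    exact le_antisymm (Nat.sInf_le ((h _ hB).2 (Nat.sInf_mem hBne)))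
      (Nat.sInf_le ((h _ hA).1 (Nat.sInf_mem hAne)))

theorem measurable_nat_sInf {α : Type*} {m : MeasurableSpace α} {p : α → ℕ → Prop}
    (hp : ∀ t, MeasurableSet[m] {a | p a t}) : Measurable[m] fun a => sInf {t | p a t} := by
  classical
  -- Making every `t` admissible when no `t` satisfies `p` reproduces the junk value `sInf ∅ = 0`.
  have hex : ∀ a, ∃ t, p a t ∨ ∀ s, ¬ p a s := fun a =>
    (em (∃ t, p a t)).elim (fun ⟨t, ht⟩ => ⟨t, .inl ht⟩) fun h => ⟨0, .inr (not_exists.1 h)⟩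
  have hfind : (fun a => sInf {t | p a t}) = fun a => Nat.find (hex a) := by
    funext a
    by_cases h : ∃ t, p a t
    · refine le_antisymm (Nat.sInf_le ((Nat.find_spec (hex a)).resolve_right ?_))
        (Nat.find_min' _ (.inl (Nat.sInf_mem h)))
      exact fun h' => h.elim h'
    · rw [(Nat.find_eq_zero (hex a)).2 (.inr (not_exists.1 h)), Nat.sInf_eq_zero]
      exact .inr (eq_empty_of_forall_notMem (not_exists.1 h))
  rw [hfind]
  exact measurable_find hex fun t => measurableSet_setOfPred.2 <|
    (measurableSet_setOfPred.1 (hp t)).or (.forall fun s => (measurableSet_setOfPred.1 (hp s)).not)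

def aeCompletion {α : Type*} [MeasurableSpace α] (μ : Measure α) (m : MeasurableSpace α) :
    MeasurableSpace α where
  MeasurableSet' s := ∃ t, MeasurableSet[m] t ∧ s =ᵐ[μ] t
  measurableSet_empty := ⟨∅, .empty, .rfl⟩
  measurableSet_compl := fun _ ⟨t, ht, hst⟩ => ⟨tᶜ, ht.compl, hst.compl⟩
  measurableSet_iUnion := fun _ hs => by
    choose t ht hst using hs
    exact ⟨⋃ i, t i, .iUnion ht, Filter.EventuallyEq.countable_iUnion hst⟩

theorem aeCompletion_mono {α : Type*} {m₁ m₂ m0 : MeasurableSpace α} {μ : Measure α} (h : m₁ ≤ m₂) :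
    aeCompletion μ m₁ ≤ aeCompletion μ m₂ :=
  fun _ ⟨t, ht, hst⟩ => ⟨t, h t ht, hst⟩

theorem condExp_ae_eq_of_le_aeCompletion {α E : Type*} [NormedAddCommGroup E] [NormedSpace ℝ E]
    [CompleteSpace E] {m₁ m₂ m0 : MeasurableSpace α} {μ : Measure α} [IsFiniteMeasure μ]
    {f : α → E} (h₁₂ : m₁ ≤ m₂) (h₂ : m₂ ≤ m0) (h₂₁ : m₂ ≤ aeCompletion μ m₁)
    (hf : Integrable f μ) : μ[f|m₁] =ᵐ[μ] μ[f|m₂] := by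
  refine ae_eq_condExp_of_forall_setIntegral_eq h₂ hf
    (fun _ _ _ => integrable_condExp.integrableOn) (fun s hs _ => ?_)
    (stronglyMeasurable_condExp.mono h₁₂).aestronglyMeasurable
  obtain ⟨t, ht, hst⟩ := h₂₁ s hs
  rw [setIntegral_congr_set hst, setIntegral_condExp (h₁₂.trans h₂) hf ht,
    setIntegral_congr_set hst]

theorem MeasureTheory.MeasurePreserving.ae_exists_pos_apply_eq_apply_zero {α β : Type*}
    [MeasurableSpace α] {μ : Measure α} [IsFiniteMeasure μ] {T : α → α} (hT : MeasurePreserving T μ μ)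
    [MeasurableSpace β] [Countable β] [MeasurableSingletonClass β] {Y : ℕ → α → β}
    (hY : ∀ n, Measurable (Y n)) (hYT : ∀ n x, Y (n + 1) (T x) = Y n x) :
    ∀ᵐ x ∂μ, ∃ t, 0 < t ∧ Y t x = Y 0 x := by
  have hiter : ∀ m n x, Y (n + m) (T^[m] x) = Y n x := by
    intro m
    induction m with
    | zero => simp
    | succ m ih => intro n x; rw [Function.iterate_succ_apply', ← add_assoc, hYT, ih]
  have hvalue : ∀ b, ∀ᵐ x ∂μ, Y 0 x = b → ∃ t, 0 < t ∧ Y t x = b := by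
    intro b
    set s := {x | Y 0 x = b ∧ ∀ t, 0 < t → Y t x ≠ b}
    have hs : MeasurableSet s := measurableSet_setOfPred.2 <| ((hY 0).eq_const b).and <|
      .forall fun t => measurable_const.imp ((hY t).eq_const b).not
    -- `s` is disjoint from `T^[m] ⁻¹' s` for `m ≥ 1`, so Poincaré recurrence makes it null.
    have hnull := hT.conservative.measure_mem_forall_ge_image_notMem_eq_zero hs.nullMeasurableSet 1
    have hsub : s ⊆ {x ∈ s | ∀ m ≥ 1, T^[m] x ∉ s} := fun x hx =>
      ⟨hx, fun m hm hmx => hmx.2 m hm (by simpa using (hiter m 0 x).trans hx.1)⟩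
    filter_upwards [measure_eq_zero_iff_ae_notMem.1 (measure_mono_null hsub hnull)] with x hx h0
    by_contra! hne
    exact hx ⟨h0, hne⟩
  filter_upwards [ae_all_iff.2 hvalue] with x hx using hx _ rfl

section Scheme

variable {Ω : Type*} {G : ℕ → ℝ → ℕ} {X : ℤ → Ω → ℝ}

variable (G X) in
/-- `τ_{k+1} ω = sInf (returnTimes G X k ω)`, with the junk value `0` when the pattern never
recurs. -/
def returnTimes (k : ℕ) (ω : Ω) : Set ℕ :=
  {t | 0 < t ∧ ∀ i : ℕ, 1 ≤ i → i ≤ lamQ G X k ω →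
    G (k + 1) (X (-(i : ℤ) - (t : ℤ)) ω) = G (k + 1) (X (-(i : ℤ)) ω)}

variable (G X) in
noncomputable def patternQ (j : ℕ) (ω : Ω) : ℕ → Option ℕ := fun i =>
  if 1 ≤ i ∧ i ≤ lamQ G X j ω then some (G j (X (-(i : ℤ)) ω)) else none

theorem lamQ_succ (k : ℕ) (ω : Ω) :
    lamQ G X (k + 1) ω = sInf (returnTimes G X k ω) + lamQ G X k ω := rfl

theorem patF_eq_comap (j : ℕ) : patF G X j = MeasurableSpace.comap (patternQ G X j) ⊤ := rfl

theorem one_le_lamQ (k : ℕ) (ω : Ω) : 1 ≤ lamQ G X k ω := by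
  induction k with
  | zero => exact le_rfl
  | succ k ih => rw [lamQ_succ]; omega

theorem lamQ_mono (ω : Ω) : Monotone fun k => lamQ G X k ω :=
  monotone_nat_of_le_succ fun k => by rw [lamQ_succ]; omega

theorem lamQ_lt_lamQ_succ {k : ℕ} {ω : Ω} (h : (returnTimes G X k ω).Nonempty) :
    lamQ G X k ω < lamQ G X (k + 1) ω := by
  have := (Nat.sInf_mem h).1
  rw [lamQ_succ]
  omega

theorem patternQ_of_le {j i : ℕ} {ω : Ω} (hi : 1 ≤ i) (hij : i ≤ lamQ G X j ω) :
    patternQ G X j ω i = some (G j (X (-(i : ℤ)) ω)) :=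
  if_pos ⟨hi, hij⟩

theorem patternQ_eq_iff {j : ℕ} {ω ω' : Ω} :
    patternQ G X j ω = patternQ G X j ω' ↔ lamQ G X j ω = lamQ G X j ω' ∧
      ∀ i : ℕ, 1 ≤ i → i ≤ lamQ G X j ω → G j (X (-(i : ℤ)) ω) = G j (X (-(i : ℤ)) ω') := by
  have hlen : ∀ {ω ω' : Ω}, patternQ G X j ω = patternQ G X j ω' →
      lamQ G X j ω ≤ lamQ G X j ω' := fun {ω ω'} h => by
    have := congrFun h (lamQ G X j ω)
    rw [patternQ_of_le (one_le_lamQ _ _) le_rfl, patternQ] at this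
    by_contra hlt
    rw [if_neg fun hc => hlt hc.2] at this
    exact Option.some_ne_none _ this
  constructor
  · intro h
    have hlam := le_antisymm (hlen h) (hlen h.symm)
    refine ⟨hlam, fun i hi hij => Option.some_injective _ ?_⟩
    rw [← patternQ_of_le hi hij, h, patternQ_of_le hi (hlam ▸ hij)]
  · rintro ⟨hlam, hval⟩
    funext i
    by_cases hij : 1 ≤ i ∧ i ≤ lamQ G X j ω
    · rw [patternQ_of_le hij.1 hij.2, patternQ_of_le hij.1 (hlam ▸ hij.2), hval i hij.1 hij.2]
    · rw [patternQ, patternQ, if_neg hij, if_neg (hlam ▸ hij)]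

theorem quantizer_eq_of_le (hG : Monotone fun k => MeasurableSpace.comap (G k) ⊤) {k j : ℕ}
    (hkj : k ≤ j) {x y : ℝ} (h : G j x = G j y) : G k x = G k y :=
  MeasurableSpace.comap_top_le_comap_top_iff.1 (hG hkj) x y h

/-- Each return time `τ_{m+1}` only compares positions up to `λ_{m+1} ≤ λ_j`. -/
theorem lamQ_eq_of_patternQ_eq (hG : Monotone fun k => MeasurableSpace.comap (G k) ⊤)
    {j : ℕ} {ω ω' : Ω} (h : patternQ G X j ω = patternQ G X j ω') {m : ℕ} (hm : m ≤ j) :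
    lamQ G X m ω = lamQ G X m ω' := by
  obtain ⟨hlam, hval⟩ := patternQ_eq_iff.1 h
  induction m with
  | zero => rfl
  | succ m ih =>
    have ih := ih (by omega)
    have hagree : ∀ n : ℤ, -(lamQ G X j ω : ℤ) ≤ n → n < 0 →
        G (m + 1) (X n ω) = G (m + 1) (X n ω') := by
      intro n hn1 hn2
      obtain ⟨i, rfl⟩ : ∃ i : ℕ, n = -(i : ℤ) := ⟨(-n).toNat, by omega⟩
      exact quantizer_eq_of_le hG hm (hval i (by omega) (by omega))
    have hω : lamQ G X (m + 1) ω ≤ lamQ G X j ω := lamQ_mono ω hm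
    have hω' : lamQ G X (m + 1) ω' ≤ lamQ G X j ω' := lamQ_mono ω' hm
    rw [lamQ_succ] at hω hω'
    rw [lamQ_succ, lamQ_succ, ih]
    congr 1
    refine Nat.sInf_eq_of_forall_le_mem_iff (N := lamQ G X j ω - lamQ G X m ω') (fun t ht => ?_)
      (by omega) (by omega)
    simp only [returnTimes, mem_ofPred_eq, ih]
    refine and_congr_right fun _ => forall₃_congr fun i hi hile => ?_
    rw [hagree _ (by omega) (by omega), hagree _ (by omega) (by omega)]

theorem patF_mono (hG : Monotone fun k => MeasurableSpace.comap (G k) ⊤) :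
    Monotone (patF G X) := by
  refine monotone_nat_of_le_succ fun j => ?_
  rw [patF_eq_comap, patF_eq_comap, MeasurableSpace.comap_top_le_comap_top_iff]
  intro ω ω' h
  have hval := (patternQ_eq_iff.1 h).2
  refine patternQ_eq_iff.2 ⟨lamQ_eq_of_patternQ_eq hG h j.le_succ, fun i hi hij => ?_⟩
  exact quantizer_eq_of_le hG j.le_succ (hval i hi (hij.trans (lamQ_mono ω j.le_succ)))

end Scheme

section Measurability

variable {Ω : Type*} {G : ℕ → ℝ → ℕ} {X : ℤ → Ω → ℝ} {m : MeasurableSpace Ω}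

theorem measurable_lamQ (hGX : ∀ k (n : ℤ), n < 0 → Measurable[m] fun ω => G k (X n ω))
    (k : ℕ) : Measurable[m] (lamQ G X k) := by
  induction k with
  | zero => exact measurable_const
  | succ k ih =>
    refine Measurable.add (measurable_nat_sInf fun t => ?_) ih
    refine measurableSet_setOfPred.2 (measurable_const.and (.forall fun i => ?_))
    rcases Nat.eq_zero_or_pos i with rfl | hi
    · simp
    refine measurable_const.imp (.imp (measurableSet_setOfPred.1 (ih measurableSet_Ici)) ?_)
    exact measurableSet_setOfPred.1 (measurableSet_eq_fun (hGX _ _ (by omega)) (hGX _ _ (by omega)))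

theorem countable_range_patternQ (j : ℕ) : (range (patternQ G X j)).Countable := by
  refine (countable_range fun (l : List ℕ) (i : ℕ) => if 1 ≤ i then l[i - 1]? else none).mono ?_
  rintro _ ⟨ω, rfl⟩
  refine ⟨List.ofFn fun i : Fin (lamQ G X j ω) => G j (X (-(i : ℤ) - 1) ω), funext fun i => ?_⟩
  simp only [patternQ, List.getElem?_ofFn]
  by_cases hi : 1 ≤ i
  · by_cases hij : i ≤ lamQ G X j ω
    · rw [if_pos hi, dif_pos (by omega), if_pos ⟨hi, hij⟩]
      congr 4
      omega
    · rw [if_pos hi, dif_neg (by omega), if_neg fun h => hij h.2]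
  · rw [if_neg hi, if_neg fun h => hi h.1]

theorem patF_le (hGX : ∀ k (n : ℤ), n < 0 → Measurable[m] fun ω => G k (X n ω)) (j : ℕ) :
    patF G X j ≤ m := by
  rw [patF_eq_comap]
  refine MeasurableSpace.comap_top_le_of_countable_range (countable_range_patternQ j) fun ω₀ => ?_
  have hfib : patternQ G X j ⁻¹' {patternQ G X j ω₀} = {ω | lamQ G X j ω = lamQ G X j ω₀ ∧
      ∀ i : ℕ, 1 ≤ i → i ≤ lamQ G X j ω → G j (X (-(i : ℤ)) ω) = G j (X (-(i : ℤ)) ω₀)} := by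
    ext ω
    exact patternQ_eq_iff
  rw [hfib]
  refine measurableSet_setOfPred.2 (((measurable_lamQ hGX j).eq_const _).and (.forall fun i => ?_))
  rcases Nat.eq_zero_or_pos i with rfl | hi
  · simp
  exact measurable_const.imp
    (.imp (measurableSet_setOfPred.1 (measurable_lamQ hGX j measurableSet_Ici))
      ((hGX j _ (by omega)).eq_const _))

end Measurability

section Recurrence

variable {Ω : Type*} [MeasurableSpace Ω] {μ : Measure Ω} {T : Ω → Ω} {G : ℕ → ℝ → ℕ}
  {X : ℤ → Ω → ℝ}

theorem ae_returnTimes_nonempty [IsFiniteMeasure μ] (hT : MeasurePreserving T μ μ)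
    (hshift : ∀ n ω, X n (T ω) = X (n + 1) ω) (hX : ∀ n, Measurable (X n))
    (hG : ∀ k, Measurable (G k)) :
    ∀ᵐ ω ∂μ, ∀ k, (returnTimes G X k ω).Nonempty := by
  have hrec : ∀ k L : ℕ, ∀ᵐ ω ∂μ, ∃ t : ℕ, 0 < t ∧ ∀ i : Fin L,
      G (k + 1) (X (-(i : ℤ) - 1 - t) ω) = G (k + 1) (X (-(i : ℤ) - 1) ω) := fun k L =>
    hT.ae_exists_pos_apply_eq_apply_zero
      (Y := fun (t : ℕ) ω (i : Fin L) => G (k + 1) (X (-(i : ℤ) - 1 - t) ω))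
      (fun t => measurable_pi_lambda _ fun i => (hG _).comp (hX _))
      (fun t ω => funext fun i => by simp only [hshift, Nat.cast_add, Nat.cast_one]; ring_nf)
      |>.mono fun ω ⟨t, ht, h⟩ => ⟨t, ht, fun i => by simpa using congrFun h i⟩
  filter_upwards [ae_all_iff.2 fun k => ae_all_iff.2 (hrec k)] with ω hω k
  obtain ⟨t, ht, h⟩ := hω k (lamQ G X k ω)
  refine ⟨t, ht, fun i hi hik => ?_⟩
  have := h ⟨i - 1, by omega⟩
  convert this using 3 <;> push_cast [Nat.cast_sub hi] <;> ring

theorem ae_succ_le_lamQ [IsFiniteMeasure μ] (hT : MeasurePreserving T μ μ)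
    (hshift : ∀ n ω, X n (T ω) = X (n + 1) ω) (hX : ∀ n, Measurable (X n))
    (hG : ∀ k, Measurable (G k)) :
    ∀ᵐ ω ∂μ, ∀ k, k + 1 ≤ lamQ G X k ω := by
  filter_upwards [ae_returnTimes_nonempty hT hshift hX hG] with ω hω k
  induction k with
  | zero => exact one_le_lamQ 0 ω
  | succ k ih => exact ih.trans_lt (lamQ_lt_lamQ_succ (hω k))

end Recurrence

section Past

variable {Ω : Type*} {G : ℕ → ℝ → ℕ} {X : ℤ → Ω → ℝ}

theorem measurable_pastSigma_of_neg {n : ℤ} (hn : n < 0) : Measurable[pastSigma X] (X n) := by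
  obtain ⟨k, rfl⟩ : ∃ k : ℕ, n = -(k : ℤ) - 1 := ⟨(-n - 1).toNat, by omega⟩
  exact Measurable.of_comap_le
    (le_iSup (fun k : ℕ => MeasurableSpace.comap (X (-(k : ℤ) - 1)) inferInstance) k)

variable [MeasurableSpace Ω] {μ : Measure Ω}

theorem comap_quantized_le_aeCompletion_patF {j n : ℕ} (h : ∀ᵐ ω ∂μ, n + 1 ≤ lamQ G X j ω) :
    MeasurableSpace.comap (fun ω => G j (X (-(n : ℤ) - 1) ω)) ⊤ ≤ aeCompletion μ (patF G X j) := by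
  rintro _ ⟨S, -, rfl⟩
  refine ⟨patternQ G X j ⁻¹' {p | p (n + 1) ∈ some '' S}, ⟨_, trivial, rfl⟩, ?_⟩
  filter_upwards [h] with ω hω
  have hpat : patternQ G X j ω (n + 1) = some (G j (X (-(n : ℤ) - 1) ω)) := by
    rw [patternQ_of_le (Nat.le_add_left 1 n) hω]
    push_cast
    ring_nf
  change (G j (X _ ω) ∈ S) = (patternQ G X j ω (n + 1) ∈ some '' S)
  simp [hpat]

theorem pastSigma_le_aeCompletion_iSup_patF
    (hG : Monotone fun k => MeasurableSpace.comap (G k) ⊤)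
    (hGgen : (⨆ k, MeasurableSpace.comap (G k) ⊤) = (inferInstance : MeasurableSpace ℝ))
    (hgrow : ∀ᵐ ω ∂μ, ∀ k, k + 1 ≤ lamQ G X k ω) :
    pastSigma X ≤ aeCompletion μ (⨆ j, patF G X j) := by
  refine iSup_le fun n => ?_
  rw [← hGgen, MeasurableSpace.comap_iSup]
  refine iSup_le fun k => ?_
  calc MeasurableSpace.comap (X (-(n : ℤ) - 1)) (MeasurableSpace.comap (G k) ⊤)
      ≤ MeasurableSpace.comap (X (-(n : ℤ) - 1)) (MeasurableSpace.comap (G (k + n)) ⊤) :=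
        MeasurableSpace.comap_mono (hG (Nat.le_add_right k n))
    _ ≤ aeCompletion μ (patF G X (k + n)) := by
        rw [MeasurableSpace.comap_comp]
        exact comap_quantized_le_aeCompletion_patF
          (hgrow.mono fun ω h => (Nat.le_add_left _ k).trans (h (k + n)))
    _ ≤ aeCompletion μ (⨆ j, patF G X j) := aeCompletion_mono (le_iSup (patF G X) (k + n))

end Past

theorem stmt8_general {Ω : Type*} [MeasurableSpace Ω] (μ : Measure Ω) [IsProbabilityMeasure μ]
    (T : Ω → Ω) (X : ℤ → Ω → ℝ) (G : ℕ → ℝ → ℕ)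
    (hErg : Ergodic T μ)
    (hXmeas : ∀ n, Measurable (X n))
    (hshift : ∀ n ω, X n (T ω) = X (n + 1) ω)
    (hGmono : ∀ k, MeasurableSpace.comap (G k) ⊤ ≤ MeasurableSpace.comap (G (k + 1)) ⊤)
    (hGgen : (⨆ k, MeasurableSpace.comap (G k) ⊤) = (inferInstance : MeasurableSpace ℝ))
    (C : Set ℝ) (hC : MeasurableSet C) :
    ∀ᵐ ω ∂μ,
      Tendsto
        (fun k : ℕ => (1 / (k : ℝ)) * ∑ j ∈ Finset.Icc 1 k,
          (μ[Set.indicator (X 0 ⁻¹' C) (fun _ => (1 : ℝ)) | patF G X (j - 1)]) ω)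
        atTop
        (𝓝 ((μ[Set.indicator (X 0 ⁻¹' C) (fun _ => (1 : ℝ)) | pastSigma X]) ω)) := by
  set f := Set.indicator (X 0 ⁻¹' C) fun _ => (1 : ℝ)
  have hGrefine : Monotone fun k => MeasurableSpace.comap (G k) ⊤ := monotone_nat_of_le_succ hGmono
  have hG : ∀ k, Measurable (G k) := fun k =>
    .of_comap_le ((le_iSup (fun k => MeasurableSpace.comap (G k) ⊤) k).trans hGgen.le)
  have hpast : pastSigma X ≤ ‹MeasurableSpace Ω› := iSup_le fun n => (hXmeas _).comap_le
  have hpatF : ∀ j, patF G X j ≤ pastSigma X :=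
    patF_le fun k n hn => (hG k).comp (measurable_pastSigma_of_neg hn)
  let ℱ : Filtration ℕ ‹MeasurableSpace Ω› :=
    ⟨patF G X, patF_mono hGrefine, fun j => (hpatF j).trans hpast⟩
  have hlim : μ[f | ⨆ j, patF G X j] =ᵐ[μ] μ[f | pastSigma X] :=
    condExp_ae_eq_of_le_aeCompletion (iSup_le hpatF) hpast
      (pastSigma_le_aeCompletion_iSup_patF hGrefine hGgen
        (ae_succ_le_lamQ hErg.toMeasurePreserving hshift hXmeas hG))
      ((integrable_const 1).indicator (hXmeas 0 hC))
  filter_upwards [tendsto_ae_condExp (ℱ := ℱ) f, hlim] with ω hω heq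
  rw [← heq]
  refine hω.cesaro.congr fun k => ?_
  rw [one_div, ← Finset.Ico_add_one_right_eq_Icc, Finset.sum_Ico_eq_sum_range,
    add_tsub_cancel_right]
  simp only [add_tsub_cancel_left]
  rfl

/-- For every Borel set `C`, the Cesàro averages of the successive
conditional probabilities converge almost surely to the conditional probability given the
infinite past:
`(1/k) ∑_{j=1}^k P(X_0 ∈ C | σ(G_{j-1}(X_{-λ_{j-1}}^{-1}))) → P(X_0 ∈ C | X_{-1}, X_{-2}, …)`. -/
theorem stmt8 {Ω : Type*} [MeasurableSpace Ω] (μ : Measure Ω) [IsProbabilityMeasure μ]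
    (T : Ω → Ω) (X : ℤ → Ω → ℝ) (G : ℕ → ℝ → ℕ)
    (hErg : Ergodic T μ)
    (hXmeas : ∀ n, Measurable (X n))
    (hshift : ∀ n ω, X n (T ω) = X (n + 1) ω)
    (hGfin : ∀ k, (Set.range (G k)).Finite)
    (hGint : ∀ k n, ∃ a b : EReal,
      (G k) ⁻¹' {n} = {x : ℝ | a < (x : EReal) ∧ (x : EReal) ≤ b})
    (hGmono : ∀ k, MeasurableSpace.comap (G k) ⊤ ≤ MeasurableSpace.comap (G (k + 1)) ⊤)
    (hGgen : (⨆ k, MeasurableSpace.comap (G k) ⊤) = (inferInstance : MeasurableSpace ℝ))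
    (C : Set ℝ) (hC : MeasurableSet C) :
    ∀ᵐ ω ∂μ,
      Tendsto
        (fun k : ℕ => (1 / (k : ℝ)) * ∑ j ∈ Finset.Icc 1 k,
          (μ[Set.indicator (X 0 ⁻¹' C) (fun _ => (1 : ℝ)) | patF G X (j - 1)]) ω)
        atTop
        (𝓝 ((μ[Set.indicator (X 0 ⁻¹' C) (fun _ => (1 : ℝ)) | pastSigma X]) ω)) :=
  stmt8_general μ T X G hErg hXmeas hshift hGmono hGgen C hC
end
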